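/- Let f : Ω → 𝕆 be a slice regular function on a symmetric slice domain Ω ⊆ 𝕆. If |f| attains a local minimum at a real point w₀ ∈ Ω ∩ ℝ, then either f(w₀) = 0 or f is constant. -/

import Mathlib

/-
If `f` is not constant on the slice `ℂ_I`, then near `x₀` it has a leading term:
`f (x₀ + z) = f x₀ + (z ^ m)_I v + o(|z| ^ m)` with `m ≥ 1`, `v ≠ 0`, where `(z ^ m)_I` acts by
left multiplication. Indeed, left multiplication by `I` is a complex structure on `𝕆`
(`I (I v) = -v` by left alternativity) for which `f` restricted to `ℂ_I` is holomorphic. Reading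
`m` and `v` off the real axis shows that they do not depend on `I`.

Since `|f|²` has a local minimum at `x₀`, its first variation `2 tᵐ ⟪f x₀, (ωᵐ)_I v⟫` along each ray
`x₀ + t ω` is nonnegative. As `I` and `ω` vary, `(ωᵐ)_I` runs over all of `𝕆`, so
`⟪f x₀, w v⟫ ≥ 0` for every octonion `w`. Taking `w = -(f x₀) v̄` and using `(x ȳ) y = |y|² x`
gives `-|v|² |f x₀|² ≥ 0`, so `f x₀ = 0`. Hence if `f x₀ ≠ 0`, then `f` is constant on every
slice, and so on `Ω`, since every octonion lies on some slice.
-/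

noncomputable section

open Quaternion

/-- The octonions, realized via the Cayley–Dickson construction over the quaternions. -/
abbrev Octo := ℍ[ℝ] × ℍ[ℝ]

namespace Octo

/-- Octonion multiplication (Cayley–Dickson): (z₁,z₂)(w₁,w₂) = (z₁w₁ - w̄₂z₂, z₂w̄₁ + w₂z₁). -/
def mul' (z w : Octo) : Octo :=
  (z.1 * w.1 - star w.2 * z.2, z.2 * star w.1 + w.2 * z.1)

/-- Octonionic conjugation. -/
def conj' (x : Octo) : Octo := (star x.1, -x.2)

/-- The multiplicative unit of the octonions. -/
def one' : Octo := (1, 0)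

/-- The embedding of the reals into the octonions. -/
def emb (x : ℝ) : Octo := (algebraMap ℝ ℍ[ℝ] x, 0)

/-- The real part of an octonion. -/
def re' (x : Octo) : ℝ := x.1.re

/-- The imaginary part of an octonion. -/
def im' (x : Octo) : Octo := x - emb (re' x)

/-- The standard Euclidean inner product on 𝕆 ≅ ℝ⁸. -/
def inner' (x y : Octo) : ℝ := (inner ℝ x.1 y.1 : ℝ) + (inner ℝ x.2 y.2 : ℝ)

/-- The Euclidean norm on the octonions. -/
def norm' (x : Octo) : ℝ := Real.sqrt (inner' x x)

/-- The multiplicative inverse of a nonzero octonion. -/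
def inv' (x : Octo) : Octo := (inner' x x)⁻¹ • conj' x

/-- The associator [u,v,w] = (uv)w - u(vw). -/
def assoc' (u v w : Octo) : Octo := mul' (mul' u v) w - mul' u (mul' v w)

/-- n-th power of an octonion. -/
def pow' (x : Octo) : ℕ → Octo
  | 0 => one'
  | n + 1 => mul' x (pow' x n)

/-- A purely imaginary unit octonion: I ∈ 𝕊 iff I² = -1. -/
def IsImUnit (I : Octo) : Prop := mul' I I = - one'

/-- The point x + yI on the slice ℂ_I. -/
def pt (I : Octo) (p : ℝ × ℝ) : Octo := emb p.1 + p.2 • I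

/-- The slice ℂ_I = ℝ ⊕ Iℝ. -/
def sliceSet (I : Octo) : Set Octo := {z | ∃ p : ℝ × ℝ, z = pt I p}

/-- e^{θI} = cos θ + (sin θ) I. -/
def expI (θ : ℝ) (I : Octo) : Octo := emb (Real.cos θ) + Real.sin θ • I

/-- Slice regularity: on every slice ℂ_I the function is holomorphic, i.e. real
differentiable with ∂f/∂x + I ∂f/∂y = 0. -/
def SliceRegular (Ω : Set Octo) (f : Octo → Octo) : Prop :=
  ∀ I, IsImUnit I → ∀ p : ℝ × ℝ, pt I p ∈ Ω →
    ∃ fx fy : Octo,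
      HasFDerivAt (fun q : ℝ × ℝ => f (pt I q))
        ((ContinuousLinearMap.fst ℝ ℝ ℝ).smulRight fx
          + (ContinuousLinearMap.snd ℝ ℝ ℝ).smulRight fy) p
      ∧ fx + mul' I fy = 0

/-- Symmetric slice domain: open, connected, meeting the real axis, with each slice a
domain, and axially symmetric. -/
def SymSliceDomain (Ω : Set Octo) : Prop :=
  IsOpen Ω ∧ IsConnected Ω ∧ (∃ x : ℝ, emb x ∈ Ω) ∧
  (∀ I, IsImUnit I → IsConnected {p : ℝ × ℝ | pt I p ∈ Ω}) ∧
  (∀ I J, IsImUnit I → IsImUnit J → ∀ p : ℝ × ℝ, pt I p ∈ Ω → pt J p ∈ Ω)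

/-- The open unit ball 𝔹 of the octonions. -/
def ball1 : Set Octo := {z | norm' z < 1}

end Octo

open Topology Filter Set

theorem tendsto_pow_nhdsGT_zero {n : ℕ} (hn : n ≠ 0) :
    Tendsto (fun t : ℝ => t ^ n) (𝓝[>] 0) (𝓝 0) :=
  ((continuous_pow n).tendsto' 0 0 (zero_pow hn)).mono_left nhdsWithin_le_nhds

section LeadingTerm

variable {E : Type*} [NormedAddCommGroup E] [NormedSpace ℝ E]

theorem eq_zero_of_tendsto_inv_pow_smul_of_lt {φ : ℝ → E} {m n : ℕ} {v w : E} (hmn : m < n)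
    (hv : Tendsto (fun t => (t ^ m)⁻¹ • φ t) (𝓝[>] 0) (𝓝 v))
    (hw : Tendsto (fun t => (t ^ n)⁻¹ • φ t) (𝓝[>] 0) (𝓝 w)) : v = 0 := by
  have hw' := (tendsto_pow_nhdsGT_zero (Nat.sub_ne_zero_of_lt hmn)).smul hw
  rw [zero_smul] at hw'
  refine tendsto_nhds_unique (hv.congr' ?_) hw'
  filter_upwards [self_mem_nhdsWithin] with t (ht : 0 < t)
  rw [smul_smul, ← pow_sub_mul_pow t hmn.le]
  field_simp

theorem eq_of_tendsto_inv_pow_smul {φ : ℝ → E} {m n : ℕ} {v w : E}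
    (hv : Tendsto (fun t => (t ^ m)⁻¹ • φ t) (𝓝[>] 0) (𝓝 v))
    (hw : Tendsto (fun t => (t ^ n)⁻¹ • φ t) (𝓝[>] 0) (𝓝 w)) (hv0 : v ≠ 0) (hw0 : w ≠ 0) :
    m = n ∧ v = w := by
  rcases lt_trichotomy m n with hmn | rfl | hnm
  · exact (hv0 (eq_zero_of_tendsto_inv_pow_smul_of_lt hmn hv hw)).elim
  · exact ⟨rfl, tendsto_nhds_unique hv hw⟩
  · exact (hw0 (eq_zero_of_tendsto_inv_pow_smul_of_lt hnm hw hv)).elim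

end LeadingTerm

theorem inner_nonneg_of_tendsto_inv_pow_smul_sub {E : Type*} [NormedAddCommGroup E]
    [InnerProductSpace ℝ E] {g : ℝ → E} {c v : E} {m : ℕ} (hm : 1 ≤ m)
    (hg : Tendsto (fun t => (t ^ m)⁻¹ • (g t - c)) (𝓝[>] 0) (𝓝 v))
    (hmin : ∀ᶠ t in 𝓝[>] 0, ‖c‖ ≤ ‖g t‖) : 0 ≤ inner ℝ c v := by
  set w := fun t : ℝ => (t ^ m)⁻¹ • (g t - c)
  have hlim : Tendsto (fun t => 2 * inner ℝ c (w t) + t ^ m * ‖w t‖ ^ 2) (𝓝[>] 0)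
      (𝓝 (2 * inner ℝ c v + 0 * ‖v‖ ^ 2)) :=
    ((tendsto_const_nhds.inner hg).const_mul 2).add
      ((tendsto_pow_nhdsGT_zero (by omega)).mul (hg.norm.pow 2))
  rw [zero_mul, add_zero] at hlim
  suffices 0 ≤ 2 * inner ℝ c v by linarith
  refine ge_of_tendsto hlim ?_
  filter_upwards [hmin, self_mem_nhdsWithin] with t hct (ht : 0 < t)
  have htm : 0 < t ^ m := pow_pos ht m
  -- `‖g t‖² - ‖c‖² = t ^ m * (2 ⟪c, w t⟫ + t ^ m ‖w t‖²)`
  have hg_eq : g t = c + t ^ m • w t := by simp [w, smul_smul, htm.ne']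
  have hsq : ‖c‖ ^ 2 ≤ ‖g t‖ ^ 2 := pow_le_pow_left₀ (norm_nonneg c) hct 2
  rw [hg_eq, norm_add_sq_real, inner_smul_right, norm_smul, Real.norm_of_nonneg htm.le] at hsq
  nlinarith

theorem AnalyticOnNhd.eqOn_const_or_exists_pow_smul {𝕜 E : Type*} [NontriviallyNormedField 𝕜]
    [NormedAddCommGroup E] [NormedSpace 𝕜 E] {G : 𝕜 → E} {U : Set 𝕜} {z₀ : 𝕜}
    (hG : AnalyticOnNhd 𝕜 G U) (hU : IsPreconnected U) (hz₀ : z₀ ∈ U) :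
    EqOn G (fun _ => G z₀) U ∨ ∃ m, 1 ≤ m ∧ ∃ H : 𝕜 → E, ContinuousAt H z₀ ∧ H z₀ ≠ 0 ∧
      ∀ᶠ z in 𝓝 z₀, G z = G z₀ + (z - z₀) ^ m • H z := by
  by_cases hloc : ∀ᶠ z in 𝓝 z₀, G z - G z₀ = 0
  · exact .inl <| hG.eqOn_of_preconnected_of_eventuallyEq analyticOnNhd_const hU hz₀ <|
      hloc.mono fun z hz => sub_eq_zero.1 hz
  obtain ⟨m, H, hHan, hH0, hGH⟩ :=
    ((hG z₀ hz₀).sub analyticAt_const).exists_eventuallyEq_pow_smul_nonzero_iff.2 hloc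
  have hm : m ≠ 0 := by
    rintro rfl
    exact hH0 (by simpa using hGH.self_of_nhds.symm)
  exact .inr ⟨m, Nat.one_le_iff_ne_zero.2 hm, H, hHan.continuousAt, hH0,
    hGH.mono fun z hz => eq_add_of_sub_eq' hz⟩

namespace Octo

theorem inner'_eq_inner (x y : Octo) :
    inner' x y = inner ℝ (WithLp.toLp 2 x) (WithLp.toLp 2 y) := by
  simp [inner', WithLp.prod_inner_apply]

theorem norm'_eq_norm (x : Octo) : norm' x = ‖WithLp.toLp 2 x‖ := by
  rw [norm', inner'_eq_inner, real_inner_self_eq_norm_sq, Real.sqrt_sq (norm_nonneg _)]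

theorem mul'_add_left (x y z : Octo) : mul' (x + y) z = mul' x z + mul' y z := by
  simp only [mul', Prod.fst_add, Prod.snd_add, add_mul, mul_add, Prod.mk_add_mk]
  congr 1 <;> abel

theorem mul'_add_right (x y z : Octo) : mul' x (y + z) = mul' x y + mul' x z := by
  simp only [mul', Prod.fst_add, Prod.snd_add, star_add, add_mul, mul_add, Prod.mk_add_mk]
  congr 1 <;> abel

theorem mul'_smul_left (a : ℝ) (x y : Octo) : mul' (a • x) y = a • mul' x y := by
  simp only [mul', Prod.smul_fst, Prod.smul_snd, Prod.smul_mk, smul_mul_assoc, mul_smul_comm,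
    smul_sub, smul_add]

theorem mul'_smul_right (a : ℝ) (x y : Octo) : mul' x (a • y) = a • mul' x y := by
  simp only [mul', Prod.smul_fst, Prod.smul_snd, Prod.smul_mk, Quaternion.star_smul,
    smul_mul_assoc, mul_smul_comm, smul_sub, smul_add]

theorem mul'_neg_left (x y : Octo) : mul' (-x) y = -mul' x y := by
  simpa using mul'_smul_left (-1) x y

theorem mul'_neg_right (x y : Octo) : mul' x (-y) = -mul' x y := by
  simpa using mul'_smul_right (-1) x y

theorem one'_mul' (x : Octo) : mul' one' x = x := by
  simp [mul', one']

theorem emb_mul' (a : ℝ) (x : Octo) : mul' (emb a) x = a • x := by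
  refine Prod.ext ?_ ?_
  · simp [mul', emb, Algebra.smul_def]
  · simp [mul', emb, Algebra.smul_def, Quaternion.coe_commutes]

def lmul (x : Octo) : Octo →ₗ[ℝ] Octo where
  toFun := mul' x
  map_add' := mul'_add_right x
  map_smul' a := mul'_smul_right a x

theorem mul'_mul'_self_left (x y : Octo) : mul' x (mul' x y) = mul' (mul' x x) y := by
  obtain ⟨a, b⟩ := x; obtain ⟨c, d⟩ := y
  simp only [mul', Prod.mk.injEq]
  constructor <;> ext <;> simp <;> ring

theorem IsImUnit.mul'_mul' {I : Octo} (hI : IsImUnit I) (v : Octo) :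
    mul' I (mul' I v) = -v := by
  rw [mul'_mul'_self_left, hI, mul'_neg_left, one'_mul']

theorem mul'_conj'_mul' (x y : Octo) : mul' (mul' x (conj' y)) y = inner' y y • x := by
  obtain ⟨a, b⟩ := x; obtain ⟨c, d⟩ := y
  simp only [inner', mul', conj', Prod.smul_mk, Prod.mk.injEq, Quaternion.inner_def]
  constructor <;> ext <;> simp <;> ring

theorem mul'_self_of_re'_eq_zero {x : Octo} (h : re' x = 0) :
    mul' x x = -inner' x x • one' := by
  obtain ⟨a, b⟩ := x
  have ha : a.re = 0 := h
  simp only [inner', mul', one', Prod.smul_mk, Prod.mk.injEq, Quaternion.inner_def]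
  constructor <;> ext <;> simp [ha] <;> ring

theorem norm'_ne_zero {x : Octo} (hx : x ≠ 0) : norm' x ≠ 0 := by
  simpa [norm'_eq_norm] using hx

theorem eq_zero_of_forall_inner'_mul'_nonneg {c v : Octo} (hc : c ≠ 0)
    (h : ∀ w, 0 ≤ inner' c (mul' w v)) : v = 0 := by
  have hle := h (-mul' c (conj' v))
  rw [mul'_neg_left, mul'_conj'_mul'] at hle
  simp only [inner'_eq_inner, WithLp.toLp_neg, WithLp.toLp_smul, inner_neg_right,
    inner_smul_right, real_inner_self_eq_norm_sq] at hle
  have hvc : ‖WithLp.toLp 2 v‖ ^ 2 * ‖WithLp.toLp 2 c‖ ^ 2 = 0 :=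
    le_antisymm (by linarith) (by positivity)
  simpa [hc] using hvc

def slicePt (I : Octo) (z : ℂ) : Octo := pt I (z.re, z.im)

theorem slicePt_ofReal (I : Octo) (x : ℝ) : slicePt I x = emb x := by
  simp [slicePt, pt]

theorem continuous_slicePt (I : Octo) : Continuous (slicePt I) := by
  unfold slicePt pt emb; fun_prop

theorem mul'_slicePt (I : Octo) (z : ℂ) (x : Octo) :
    mul' (slicePt I z) x = z.re • x + z.im • mul' I x := by
  rw [slicePt, pt, mul'_add_left, emb_mul', mul'_smul_left]

theorem isImUnit_inr_one : IsImUnit (0, 1) := by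
  simp [IsImUnit, mul', one']

theorem isImUnit_inv_norm'_smul {v : Octo} (hre : re' v = 0) (hv : v ≠ 0) :
    IsImUnit ((norm' v)⁻¹ • v) := by
  have hn := norm'_ne_zero hv
  rw [IsImUnit, mul'_smul_left, mul'_smul_right, mul'_self_of_re'_eq_zero hre, smul_smul,
    smul_smul, inner'_eq_inner, real_inner_self_eq_norm_sq, ← norm'_eq_norm]
  field_simp
  simp

theorem exists_slicePt_eq (w : Octo) : ∃ I, IsImUnit I ∧ ∃ z : ℂ, slicePt I z = w := by
  have hw : emb (re' w) + im' w = w := by rw [im']; abel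
  by_cases him : im' w = 0
  · refine ⟨_, isImUnit_inr_one, re' w, ?_⟩
    rw [slicePt_ofReal]
    simpa [him] using hw
  · have hre : re' (im' w) = 0 := by simp [im', re', emb]
    refine ⟨_, isImUnit_inv_norm'_smul hre him, ⟨re' w, norm' (im' w)⟩, ?_⟩
    rw [slicePt, pt, smul_smul, mul_inv_cancel₀ (norm'_ne_zero him), one_smul, hw]

theorem continuous_emb : Continuous emb := by
  unfold emb; fun_prop

theorem continuous_mul'_left (x : Octo) : Continuous (mul' x) := by
  unfold mul'; fun_prop

theorem slicePt_ofReal_mul (I : Octo) (r : ℝ) (z : ℂ) : slicePt I (r * z) = r • slicePt I z := by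
  simp only [slicePt, pt, Complex.re_ofReal_mul, Complex.im_ofReal_mul, smul_add, smul_smul]
  congr 1
  refine Prod.ext ?_ (by simp [emb])
  simp [emb, Algebra.smul_def]

theorem tendsto_slicePt_ray (I : Octo) (x₀ : ℝ) (ω : ℂ) :
    Tendsto (fun t : ℝ => slicePt I (x₀ + t * ω)) (𝓝[>] 0) (𝓝 (emb x₀)) := by
  have hc : Continuous fun t : ℝ => slicePt I (x₀ + t * ω) :=
    (continuous_slicePt I).comp (by fun_prop)
  simpa [slicePt_ofReal] using (hc.tendsto 0).mono_left nhdsWithin_le_nhds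

theorem IsImUnit.exists_sliceEquiv {I : Octo} (hI : IsImUnit I) :
    ∃ (n : ℕ) (e : Octo ≃L[ℝ] (Fin n → ℂ)), ∀ z v, e (mul' (slicePt I z) v) = z • e v := by
  have hJ : lmul I * lmul I = -1 := LinearMap.ext hI.mul'_mul'
  let _ : Module ℂ Octo := Module.compHom Octo (Complex.liftAux _ hJ).toRingHom
  have hsmul (z : ℂ) (v : Octo) : z • v = mul' (slicePt I z) v := by
    show Complex.liftAux _ hJ z v = _
    simp [Complex.liftAux_apply, lmul, Algebra.algebraMap_eq_smul_one, mul'_slicePt]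
  have : IsScalarTower ℝ ℂ Octo :=
    ⟨fun a z v => by simp [hsmul, mul'_slicePt, smul_add, smul_smul]⟩
  have : Module.Finite ℂ Octo := Module.Finite.of_restrictScalars_finite ℝ ℂ Octo
  let E := (Module.finBasis ℂ Octo).equivFun
  refine ⟨_, (E.restrictScalars ℝ).toContinuousLinearEquiv, fun z v => ?_⟩
  rw [← hsmul]
  exact E.map_smul z v

theorem SliceRegular.differentiableOn_slice {Ω : Set Octo} {f : Octo → Octo}
    (hf : SliceRegular Ω f) {I : Octo} (hI : IsImUnit I) {n : ℕ} {e : Octo ≃L[ℝ] (Fin n → ℂ)}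
    (he : ∀ z v, e (mul' (slicePt I z) v) = z • e v) :
    DifferentiableOn ℂ (fun z => e (f (slicePt I z))) (slicePt I ⁻¹' Ω) := by
  intro z hz
  obtain ⟨fx, fy, hd, hcr⟩ := hf I hI (z.re, z.im) hz
  have hfy : fy = mul' I fx := by
    rw [eq_neg_of_add_eq_zero_left hcr, mul'_neg_right, hI.mul'_mul', neg_neg]
  have hreal := (e : Octo →L[ℝ] (Fin n → ℂ)).hasFDerivAt.comp z
    (hd.comp z Complex.equivRealProdCLM.hasFDerivAt)
  refine (hasFDerivAt_of_restrictScalars ℝ hreal (f' := (1 : ℂ →L[ℂ] ℂ).smulRight (e fx))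
    ?_).differentiableAt.differentiableWithinAt
  refine ContinuousLinearMap.ext fun w => ?_
  simp [hfy, ← he w fx, mul'_slicePt]

theorem isPreconnected_preimage_slicePt {Ω : Set Octo} {I : Octo}
    (h : IsConnected {p : ℝ × ℝ | pt I p ∈ Ω}) : IsPreconnected (slicePt I ⁻¹' Ω) :=
  Complex.equivRealProdCLM.toHomeomorph.isPreconnected_preimage.2 h.isPreconnected

/-- Along every ray `t ↦ x₀ + t ω` of the slice `ℂ_I`, `f = f(x₀) + tᵐ (ω^m)_I v + o(tᵐ)` as
`t → 0⁺`, where `(ω^m)_I` is the point of `ℂ_I` corresponding to `ω^m`. -/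
def HasLeadingTerm (f : Octo → Octo) (I : Octo) (x₀ : ℝ) (m : ℕ) (v : Octo) : Prop :=
  ∀ ω : ℂ, Tendsto (fun t : ℝ => (t ^ m)⁻¹ • (f (slicePt I (x₀ + t * ω)) - f (emb x₀)))
    (𝓝[>] 0) (𝓝 (mul' (slicePt I (ω ^ m)) v))

theorem hasLeadingTerm_of_eventually_eq {f : Octo → Octo} {I : Octo} {x₀ : ℝ} {m : ℕ}
    {h : ℂ → Octo} (hh : ContinuousAt h x₀)
    (hfh : ∀ᶠ z in 𝓝 (x₀ : ℂ),
      f (slicePt I z) = f (emb x₀) + mul' (slicePt I ((z - x₀) ^ m)) (h z)) :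
    HasLeadingTerm f I x₀ m (h x₀) := by
  intro ω
  have hray : Tendsto (fun t : ℝ => (x₀ : ℂ) + t * ω) (𝓝[>] 0) (𝓝 x₀) := by
    simpa using ((by fun_prop : Continuous fun t : ℝ => (x₀ : ℂ) + t * ω).tendsto 0).mono_left
      nhdsWithin_le_nhds
  refine (((continuous_mul'_left _).tendsto _).comp (hh.tendsto.comp hray)).congr' ?_
  filter_upwards [hray.eventually hfh, self_mem_nhdsWithin] with t ht (htpos : 0 < t)
  rw [ht, add_sub_cancel_left, add_sub_cancel_left, mul_pow, ← Complex.ofReal_pow,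
    slicePt_ofReal_mul, mul'_smul_left, smul_smul, inv_mul_cancel₀ (pow_pos htpos m).ne',
    one_smul]
  rfl

theorem SliceRegular.slice_eqOn_or_hasLeadingTerm {Ω : Set Octo} {f : Octo → Octo}
    (hΩ : IsOpen Ω) (hf : SliceRegular Ω f) {I : Octo} (hI : IsImUnit I)
    (hconn : IsConnected {p : ℝ × ℝ | pt I p ∈ Ω}) {x₀ : ℝ} (hx₀ : emb x₀ ∈ Ω) :
    (∀ z, slicePt I z ∈ Ω → f (slicePt I z) = f (emb x₀)) ∨
      ∃ m, 1 ≤ m ∧ ∃ v ≠ 0, HasLeadingTerm f I x₀ m v := by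
  obtain ⟨n, e, he⟩ := hI.exists_sliceEquiv
  have he' (z : ℂ) (w : Fin n → ℂ) : e.symm (z • w) = mul' (slicePt I z) (e.symm w) :=
    e.injective (by rw [he, e.apply_symm_apply, e.apply_symm_apply])
  have hx₀U : (x₀ : ℂ) ∈ slicePt I ⁻¹' Ω := by rwa [mem_preimage, slicePt_ofReal]
  have hG := (hf.differentiableOn_slice hI he).analyticOnNhd (hΩ.preimage (continuous_slicePt I))
  rcases hG.eqOn_const_or_exists_pow_smul (isPreconnected_preimage_slicePt hconn) hx₀U with
    hconst | ⟨m, hm, H, hH, hH0, hGH⟩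
  · refine .inl fun z hz => ?_
    simpa [slicePt_ofReal] using congrArg e.symm (hconst hz)
  · refine .inr ⟨m, hm, e.symm (H x₀), by simpa using hH0,
      hasLeadingTerm_of_eventually_eq (h := fun z => e.symm (H z))
        (e.symm.continuous.continuousAt.comp hH) (hGH.mono fun z hz => ?_)⟩
    simpa [slicePt_ofReal, he'] using congrArg e.symm hz

namespace HasLeadingTerm

variable {f : Octo → Octo} {I : Octo} {x₀ : ℝ} {m : ℕ} {v : Octo}

theorem tendsto_axis (h : HasLeadingTerm f I x₀ m v) :
    Tendsto (fun t : ℝ => (t ^ m)⁻¹ • (f (emb (x₀ + t)) - f (emb x₀))) (𝓝[>] 0) (𝓝 v) := by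
  simpa [← Complex.ofReal_add, slicePt_ofReal, mul'_slicePt] using h 1

theorem unique {J : Octo} {n : ℕ} {w : Octo} (h : HasLeadingTerm f I x₀ m v)
    (h' : HasLeadingTerm f J x₀ n w) (hv : v ≠ 0) (hw : w ≠ 0) : m = n ∧ v = w :=
  eq_of_tendsto_inv_pow_smul h.tendsto_axis h'.tendsto_axis hv hw

theorem eq_zero_of_eqOn {Ω : Set Octo} {J : Octo} (h : HasLeadingTerm f I x₀ m v) (hΩ : IsOpen Ω)
    (hx₀ : emb x₀ ∈ Ω) (hJ : ∀ z, slicePt J z ∈ Ω → f (slicePt J z) = f (emb x₀)) : v = 0 := by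
  have hnear : ∀ᶠ t : ℝ in 𝓝 0, emb (x₀ + t) ∈ Ω :=
    (continuous_emb.comp (continuous_const_add x₀)).continuousAt.preimage_mem_nhds
      (by simpa using hΩ.mem_nhds hx₀)
  refine tendsto_nhds_unique h.tendsto_axis (tendsto_const_nhds.congr' ?_)
  filter_upwards [nhdsWithin_le_nhds hnear] with t ht
  rw [← slicePt_ofReal J] at ht
  rw [← slicePt_ofReal J, hJ _ ht, sub_self, smul_zero]

theorem inner'_nonneg {Ω : Set Octo} (h : HasLeadingTerm f I x₀ m v) (hm : 1 ≤ m)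
    (hΩ : IsOpen Ω) (hx₀ : emb x₀ ∈ Ω) (hmin : IsLocalMinOn (fun z => norm' (f z)) Ω (emb x₀))
    (ω : ℂ) : 0 ≤ inner' (f (emb x₀)) (mul' (slicePt I (ω ^ m)) v) := by
  rw [inner'_eq_inner]
  refine inner_nonneg_of_tendsto_inv_pow_smul_sub hm
    (g := fun t : ℝ => WithLp.toLp 2 (f (slicePt I (x₀ + t * ω)))) ?_ ?_
  · refine (((WithLp.prodContinuousLinearEquiv 2 ℝ ℍ[ℝ] ℍ[ℝ]).symm.continuous.tendsto _).comp
      (h ω)).congr fun t => ?_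
    simp only [Function.comp_apply, map_smul, map_sub,
      WithLp.prodContinuousLinearEquiv_symm_apply]
  · simpa [norm'_eq_norm] using
      (tendsto_slicePt_ray I x₀ ω).eventually (hmin.isLocalMin (hΩ.mem_nhds hx₀))

end HasLeadingTerm

end Octo

open Octo in
/-- Minimum principle at a real point: if |f| attains a local minimum at a real point of
a symmetric slice domain, then either f vanishes there or f is constant. -/
theorem minimum_principle_real (Ω : Set Octo) (hΩ : SymSliceDomain Ω)
    (f : Octo → Octo) (hf : SliceRegular Ω f)
    (x₀ : ℝ) (hx₀ : emb x₀ ∈ Ω)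
    (hmin : IsLocalMinOn (fun z => norm' (f z)) Ω (emb x₀)) :
    f (emb x₀) = 0 ∨ ∀ z ∈ Ω, ∀ w ∈ Ω, f z = f w := by
  obtain ⟨hopen, -, -, hslice, -⟩ := hΩ
  rcases eq_or_ne (f (emb x₀)) 0 with h0 | hc
  · exact .inl h0
  have hdich (I : Octo) (hI : IsImUnit I) :=
    hf.slice_eqOn_or_hasLeadingTerm hopen hI (hslice I hI) hx₀
  suffices hconst : ∀ I, IsImUnit I → ∀ z, slicePt I z ∈ Ω → f (slicePt I z) = f (emb x₀) by
    refine .inr fun z hz w hw => ?_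
    obtain ⟨I, hI, z, rfl⟩ := exists_slicePt_eq z
    obtain ⟨J, hJ, w, rfl⟩ := exists_slicePt_eq w
    rw [hconst I hI z hz, hconst J hJ w hw]
  by_contra! ⟨I, hI, z, hz, hne⟩
  obtain ⟨m, hm, v, hv, hIv⟩ := (hdich I hI).resolve_left fun h => hne (h z hz)
  refine hv (eq_zero_of_forall_inner'_mul'_nonneg hc fun w => ?_)
  obtain ⟨J, hJ, u, rfl⟩ := exists_slicePt_eq w
  obtain ⟨ω, rfl⟩ := IsAlgClosed.exists_pow_nat_eq u (by omega : 0 < m)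
  obtain ⟨n, -, w, hw, hJw⟩ :=
    (hdich J hJ).resolve_left fun h => hv (hIv.eq_zero_of_eqOn hopen hx₀ h)
  obtain ⟨rfl, rfl⟩ := hJw.unique hIv hw hv
  exact hJw.inner'_nonneg hm hopen hx₀ hmin ω
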